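/- arXiv:2310.17392 — 3 statements merged into one kernel-verified Lean document; each statement's English description precedes it below -/
import Mathlib

section
/- Fix v̄ > 0 and 0 < ω < v̄. For ξ ∈ (0, 1), let p̂(ξ) = min{ (2 − ξ)ω, v̄ }, let r(ξ) = ( ln v̄ − ln(ω(2 − ξ)) − ln(ξ(2 − ξ))/(1 − ξ) + 1 )^{-1} if (2 − ξ)ω < v̄ and r(ξ) = ( (v̄ − ω)/((1 − ξ)ω) + (ln ω − ln(ξv̄))/(1 − ξ) )^{-1} if (2 − ξ)ω ≥ v̄, and define q_ξ(v) = 0 for v ∈ [0, ξp̂(ξ)), q_ξ(v) = (r(ξ)/(1 − ξ))·ln( v/(ξp̂(ξ)) ) for v ∈ [ξp̂(ξ), ω), q_ξ(v) = 1 − r(ξ)·ln( v̄/p̂(ξ) ) for v ∈ [ω, p̂(ξ)), and q_ξ(v) = 1 − r(ξ)·ln( v̄/v ) for v ∈ [p̂(ξ), v̄]. Then for any ξ†, ξ‡ ∈ (0, 1) with ξ† ≤ ξ‡, one has q_{ξ‡}(v) ≤ q_{ξ†}(v) for all v ∈ [0, v̄]; that is, the optimal price distribution derived from the higher conversion rate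 ξ‡ stochastically dominates the one derived from ξ†. -/
open Set Real

/-!
Write `r ξ = 1 / N ξ`, where `N = lowerMass + upperMass` splits the normalisation `q_ξ(v̄) = 1`
into the mass `r · lowerMass = q_ξ(ω⁻)` that `q_ξ` puts below `ω` and the mass `r · upperMass` on
`[ω, v̄]`. On each side of `ξ₀ = 2 - v̄ / ω`, where `p̂` switches from `(2 - ξ) ω` to `v̄`, `N` is
an explicit function of `ξ` whose derivative is controlled by `-log y ≤ 1 / y - 1` at
`y = ξ (2 - ξ)`; so `N` decreases on both pieces, hence on `(0, 1)`, and `r` increases. The upper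
mass increases as well, hence `q_ξ(ω⁻) = 1 - r · upperMass` decreases. Together with `ξ p̂(ξ)`
increasing and `p̂(ξ)` decreasing, this compares the two cdfs region by region; on
`[ξ‡ p̂(ξ‡), ω)` their difference is affine in `log v` and nonnegative at both ends.
-/

theorem MonotoneOn.of_inter_Iic_of_inter_Ici {α β : Type*} [LinearOrder α] [Preorder β]
    {f : α → β} {s : Set α} [hs : s.OrdConnected] {c : α}
    (h₁ : MonotoneOn f (s ∩ Iic c)) (h₂ : MonotoneOn f (s ∩ Ici c)) : MonotoneOn f s := by
  intro x hx y hy hxy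
  rcases le_total y c with hyc | hcy
  · exact h₁ ⟨hx, hxy.trans hyc⟩ ⟨hy, hyc⟩ hxy
  rcases le_total c x with hcx | hxc
  · exact h₂ ⟨hx, hcx⟩ ⟨hy, hcx.trans hxy⟩ hxy
  have hc : c ∈ s := hs.out hx hy ⟨hxc, hcy⟩
  exact (h₁ ⟨hx, hxc⟩ ⟨hc, le_rfl⟩ hxc).trans (h₂ ⟨hc, le_rfl⟩ ⟨hy, hcy⟩ hcy)

theorem AntitoneOn.of_inter_Iic_of_inter_Ici {α β : Type*} [LinearOrder α] [Preorder β]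
    {f : α → β} {s : Set α} [s.OrdConnected] {c : α}
    (h₁ : AntitoneOn f (s ∩ Iic c)) (h₂ : AntitoneOn f (s ∩ Ici c)) : AntitoneOn f s :=
  (h₁.dual_right.of_inter_Iic_of_inter_Ici h₂.dual_right).dual_right

lemma neg_log_mul_two_sub_le {x : ℝ} (h0 : 0 < x) (h2 : x < 2) :
    -log (x * (2 - x)) ≤ (1 - x) ^ 2 / (x * (2 - x)) := by
  have hy : 0 < x * (2 - x) := by nlinarith
  have : 2 - x ≠ 0 := by linarith
  have h := one_sub_inv_le_log_of_pos hy
  have e : (1 - x) ^ 2 / (x * (2 - x)) = (x * (2 - x))⁻¹ - 1 := by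
    field_simp
    ring
  linarith

lemma antitoneOn_neg_log_two_sub_sub_log_mul_div :
    AntitoneOn (fun ξ ↦ -log (2 - ξ) - log (ξ * (2 - ξ)) / (1 - ξ)) (Ioo 0 1) := by
  have hderiv : ∀ ξ ∈ Ioo (0 : ℝ) 1, HasDerivAt (fun ξ ↦ -log (2 - ξ) - log (ξ * (2 - ξ)) / (1 - ξ))
      (1 / (2 - ξ) - (2 * (1 - ξ) ^ 2 / (ξ * (2 - ξ)) + log (ξ * (2 - ξ))) / (1 - ξ) ^ 2) ξ := by
    rintro ξ ⟨h0, h1⟩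
    have h2 : 2 - ξ ≠ 0 := by linarith
    have hlog₂ : HasDerivAt (fun ξ ↦ log (2 - ξ)) (-1 / (2 - ξ)) ξ := by
      simpa [div_eq_inv_mul] using ((hasDerivAt_id' ξ).const_sub 2).log h2
    have hlogy : HasDerivAt (fun ξ ↦ log (ξ * (2 - ξ))) ((2 - 2 * ξ) / (ξ * (2 - ξ))) ξ := by
      have := ((hasDerivAt_id' ξ).fun_mul ((hasDerivAt_id' ξ).const_sub 2)).log (by nlinarith)
      convert this using 1
      ring
    refine (hlog₂.fun_neg.fun_sub (hlogy.fun_div ((hasDerivAt_id' ξ).const_sub 1)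
      (by linarith))).congr_deriv ?_
    field_simp
    ring
  refine antitoneOn_of_deriv_nonpos (convex_Ioo 0 1)
    (fun ξ hξ ↦ (hderiv ξ hξ).continuousAt.continuousWithinAt) ?_ ?_ <;> rw [interior_Ioo]
  · exact fun ξ hξ ↦ (hderiv ξ hξ).differentiableAt.differentiableWithinAt
  rintro ξ ⟨h0, h1⟩
  rw [(hderiv ξ ⟨h0, h1⟩).deriv]
  have hu : 0 < (1 - ξ) ^ 2 := by nlinarith
  have hy : 0 < ξ * (2 - ξ) := by nlinarith
  have hlog := neg_log_mul_two_sub_le h0 (by linarith)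
  have hy_le : (1 - ξ) ^ 2 / (2 - ξ) ≤ (1 - ξ) ^ 2 / (ξ * (2 - ξ)) :=
    div_le_div_of_nonneg_left hu.le hy (by nlinarith)
  rw [sub_nonpos, le_div_iff₀ hu, mul_div_assoc]
  calc 1 / (2 - ξ) * (1 - ξ) ^ 2 = (1 - ξ) ^ 2 / (2 - ξ) := by ring
    _ ≤ _ := by linarith

lemma antitoneOn_sub_log_div_one_sub {C ξ₁ : ℝ} (h1 : ξ₁ < 1)
    (hC : C ≤ log ξ₁ + (1 - ξ₁) / ξ₁) :
    AntitoneOn (fun ξ ↦ (C - log ξ) / (1 - ξ)) (Ioc 0 ξ₁) := by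
  have hderiv : ∀ ξ ∈ Ioo 0 1, HasDerivAt (fun ξ ↦ (C - log ξ) / (1 - ξ))
      ((C - log ξ - (1 - ξ) / ξ) / (1 - ξ) ^ 2) ξ := by
    rintro ξ ⟨h0, h1⟩
    refine (((hasDerivAt_log h0.ne').const_sub C).fun_div ((hasDerivAt_id' ξ).const_sub 1)
      (by linarith)).congr_deriv ?_
    field_simp
    ring
  have hIoc : Ioc 0 ξ₁ ⊆ Ioo 0 1 := Ioc_subset_Ioo_right h1
  refine antitoneOn_of_deriv_nonpos (convex_Ioc 0 ξ₁)
    (fun ξ hξ ↦ (hderiv ξ (hIoc hξ)).continuousAt.continuousWithinAt) ?_ ?_ <;> rw [interior_Ioc]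
  · exact fun ξ hξ ↦
      (hderiv ξ (hIoc (Ioo_subset_Ioc_self hξ))).differentiableAt.differentiableWithinAt
  rintro ξ ⟨h0, hξ⟩
  rw [(hderiv ξ ⟨h0, hξ.trans h1⟩).deriv]
  refine div_nonpos_of_nonpos_of_nonneg ?_ (sq_nonneg _)
  -- `log ξ + (1 - ξ) / ξ` decreases on `(0, 1)`
  have hlog : log ξ₁ - log ξ ≤ (ξ₁ - ξ) / ξ := by
    have := log_le_sub_one_of_pos (div_pos (h0.trans hξ) h0)
    rw [log_div (by linarith) h0.ne'] at this
    rw [sub_div, div_self h0.ne']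
    exact this
  have hdiv : (ξ₁ - ξ) / ξ ≤ (1 - ξ) / ξ - (1 - ξ₁) / ξ₁ := by
    rw [div_sub_div _ _ h0.ne' (by linarith), div_le_div_iff₀ h0 (by nlinarith)]
    nlinarith [mul_pos (mul_pos (sub_pos.2 hξ) h0) (sub_pos.2 h1)]
  linarith

section QuantilePricing

/-- `q_ξ` is `pricingCdf ω v̄ (ξ p̂) p̂ (r / (1 - ξ)) r`. -/
noncomputable def pricingCdf (ω vbar a p c r v : ℝ) : ℝ :=
  if v < a then 0
  else if v < ω then c * log (v / a)
  else if v < p then 1 - r * log (vbar / p)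
  else 1 - r * log (vbar / v)

lemma pricingCdf_of_le {ω vbar a p c r v : ℝ} (haω : a ≤ ω) (hv : ω ≤ v) :
    pricingCdf ω vbar a p c r v = 1 - r * log (vbar / max v p) := by
  rw [pricingCdf, if_neg (by linarith), if_neg hv.not_gt]
  split_ifs with hvp
  · rw [max_eq_right hvp.le]
  · rw [max_eq_left (not_lt.1 hvp)]

lemma pricingCdf_le_pricingCdf {ω vbar a a' p p' c c' r r' v : ℝ}
    (ha : 0 < a) (haa' : a ≤ a') (ha'ω : a' ≤ ω) (hp : p' ≤ p) (hpv : p ≤ vbar) (hv : v ≤ vbar)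
    (hc : 0 ≤ c) (hr : 0 ≤ r) (hrr' : r ≤ r') (hω : c' * log (ω / a') ≤ c * log (ω / a)) :
    pricingCdf ω vbar a' p' c' r' v ≤ pricingCdf ω vbar a p c r v := by
  rcases le_or_gt ω v with hωv | hvω
  · rw [pricingCdf_of_le ha'ω hωv, pricingCdf_of_le (haa'.trans ha'ω) hωv]
    have hm : 0 < max v p' := lt_max_of_lt_left (by linarith)
    have hlog : log (vbar / max v p) ≤ log (vbar / max v p') :=
      log_le_log (div_pos (by linarith) (hm.trans_le (max_le_max_left v hp)))
        (div_le_div_of_nonneg_left (by linarith) hm (max_le_max_left v hp))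
    have hlog₀ : 0 ≤ log (vbar / max v p) :=
      log_nonneg ((one_le_div (hm.trans_le (max_le_max_left v hp))).2 (max_le hv hpv))
    nlinarith
  have ha'0 : 0 < a' := ha.trans_le haa'
  simp only [pricingCdf, hvω, if_true]
  split_ifs with hva' hva hva
  · exact le_rfl
  · exact mul_nonneg hc (log_nonneg ((one_le_div ha).2 (not_lt.1 hva)))
  · exact absurd (hva.trans_le haa') hva'
  -- `q - q'` is affine in `log v`: compare at `v = a'` or at `v = ω`, according to its slope.
  have hv0 : 0 < v := ha'0.trans_le (not_lt.1 hva')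
  rw [log_div hv0.ne' ha'0.ne', log_div hv0.ne' ha.ne']
  rw [log_div (by linarith) ha'0.ne', log_div (by linarith) ha.ne'] at hω
  have hlog_a : log a ≤ log a' := log_le_log ha haa'
  have hlog_v : log a' ≤ log v := log_le_log ha'0 (not_lt.1 hva')
  have hlog_ω : log v ≤ log ω := log_le_log hv0 hvω.le
  rcases le_total c' c with hcc' | hcc'
  · nlinarith [mul_le_mul_of_nonneg_right hcc' (sub_nonneg.2 hlog_v)]
  · nlinarith [mul_le_mul_of_nonneg_right hcc' (sub_nonneg.2 hlog_ω)]

variable {ω vbar ξ : ℝ}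

noncomputable def capPrice (ω vbar ξ : ℝ) : ℝ := min ((2 - ξ) * ω) vbar

/-- `r ξ * lowerMass ω vbar ξ` and `r ξ * upperMass ω vbar ξ` are the masses that `q_ξ` puts on
`[ξ p̂, ω)` and on `[ω, v̄]`; `r` is the reciprocal of their sum `totalMass`. -/
noncomputable def lowerMass (ω vbar ξ : ℝ) : ℝ := log (ω / (ξ * capPrice ω vbar ξ)) / (1 - ξ)

noncomputable def upperMass (ω vbar ξ : ℝ) : ℝ :=
  log (vbar / capPrice ω vbar ξ) + (capPrice ω vbar ξ - ω) / ((1 - ξ) * ω)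

noncomputable def totalMass (ω vbar ξ : ℝ) : ℝ := lowerMass ω vbar ξ + upperMass ω vbar ξ

lemma capPrice_of_le (h : (2 - ξ) * ω ≤ vbar) : capPrice ω vbar ξ = (2 - ξ) * ω := min_eq_left h

lemma capPrice_of_ge (h : vbar ≤ (2 - ξ) * ω) : capPrice ω vbar ξ = vbar := min_eq_right h

lemma capPrice_le : capPrice ω vbar ξ ≤ vbar := min_le_right _ _

lemma lt_capPrice (hω : 0 < ω) (hωv : ω < vbar) (hξ : ξ < 1) : ω < capPrice ω vbar ξ :=
  lt_min (by nlinarith) hωv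

lemma capPrice_antitone (hω : 0 ≤ ω) : Antitone (capPrice ω vbar) :=
  fun _ _ h ↦ min_le_min_right _ (by nlinarith)

lemma mul_capPrice_lt (hω : 0 < ω) (h0 : 0 ≤ ξ) (h1 : ξ < 1) : ξ * capPrice ω vbar ξ < ω :=
  calc ξ * capPrice ω vbar ξ ≤ ξ * ((2 - ξ) * ω) := mul_le_mul_of_nonneg_left (min_le_left _ _) h0
    _ < ω := by nlinarith [mul_pos hω (pow_pos (sub_pos.2 h1) 2)]

lemma monotoneOn_mul_capPrice (hω : 0 ≤ ω) (hvbar : 0 ≤ vbar) :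
    MonotoneOn (fun ξ ↦ ξ * capPrice ω vbar ξ) (Icc 0 1) := by
  rintro ξ ⟨h0, -⟩ ξ' ⟨-, h1'⟩ h
  simp only [capPrice, mul_min_of_nonneg _ _ h0, mul_min_of_nonneg _ _ (h0.trans h)]
  exact min_le_min (by nlinarith [mul_nonneg (sub_nonneg.2 h) hω]) (by nlinarith)

lemma lowerMass_pos (hω : 0 < ω) (hωv : ω < vbar) (hξ : ξ ∈ Ioo 0 1) : 0 < lowerMass ω vbar ξ := by
  have hcap := hω.trans (lt_capPrice hω hωv hξ.2)
  refine div_pos (log_pos ?_) (sub_pos.2 hξ.2)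
  rw [one_lt_div (mul_pos hξ.1 hcap)]
  exact mul_capPrice_lt hω hξ.1.le hξ.2

lemma upperMass_nonneg (hω : 0 < ω) (hωv : ω < vbar) (hξ : ξ < 1) : 0 ≤ upperMass ω vbar ξ := by
  have hcap := lt_capPrice hω hωv hξ
  refine add_nonneg (log_nonneg ?_) (div_nonneg (by linarith) (by nlinarith))
  rw [one_le_div (hω.trans hcap)]
  exact capPrice_le

lemma two_sub_div_le_iff (hω : 0 < ω) : 2 - vbar / ω ≤ ξ ↔ (2 - ξ) * ω ≤ vbar := by
  rw [sub_le_comm, le_div_iff₀ hω]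

lemma le_two_sub_div_iff (hω : 0 < ω) : ξ ≤ 2 - vbar / ω ↔ vbar ≤ (2 - ξ) * ω := by
  rw [le_sub_comm, div_le_iff₀ hω]

lemma upperMass_of_le (hω : 0 < ω) (hξ : ξ < 1) (h : (2 - ξ) * ω ≤ vbar) :
    upperMass ω vbar ξ = log (vbar / ((2 - ξ) * ω)) + 1 := by
  rw [upperMass, capPrice_of_le h, show (2 - ξ) * ω - ω = (1 - ξ) * ω by ring,
    div_self (mul_ne_zero (by linarith) hω.ne')]

lemma upperMass_of_ge (hvbar : 0 < vbar) (h : vbar ≤ (2 - ξ) * ω) :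
    upperMass ω vbar ξ = (vbar - ω) / ((1 - ξ) * ω) := by
  rw [upperMass, capPrice_of_ge h, div_self hvbar.ne', log_one, zero_add]

lemma totalMass_of_le (hω : 0 < ω) (hξ : ξ ∈ Ioo 0 1) (h : (2 - ξ) * ω ≤ vbar) :
    totalMass ω vbar ξ =
      log vbar - log (ω * (2 - ξ)) - log (ξ * (2 - ξ)) / (1 - ξ) + 1 := by
  obtain ⟨h0, h1⟩ := hξ
  have h2 : 0 < 2 - ξ := by linarith
  have hlower : ω / (ξ * capPrice ω vbar ξ) = (ξ * (2 - ξ))⁻¹ := by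
    rw [capPrice_of_le h]
    field_simp
  rw [totalMass, lowerMass, upperMass_of_le hω h1 h, hlower, log_inv,
    log_div (by linarith [mul_pos h2 hω]) (mul_pos h2 hω).ne', mul_comm (2 - ξ)]
  ring

lemma totalMass_of_ge (hω : 0 < ω) (hωv : ω < vbar) (hξ : ξ ∈ Ioo 0 1) (h : vbar ≤ (2 - ξ) * ω) :
    totalMass ω vbar ξ =
      (vbar - ω) / ((1 - ξ) * ω) + (log ω - log (ξ * vbar)) / (1 - ξ) := by
  have hvbar : 0 < vbar := hω.trans hωv
  rw [totalMass, lowerMass, upperMass_of_ge hvbar h, capPrice_of_ge h,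
    log_div hω.ne' (mul_pos hξ.1 hvbar).ne', add_comm]

lemma totalMass_pos (hω : 0 < ω) (hωv : ω < vbar) (hξ : ξ ∈ Ioo 0 1) : 0 < totalMass ω vbar ξ :=
  add_pos_of_pos_of_nonneg (lowerMass_pos hω hωv hξ) (upperMass_nonneg hω hωv hξ.2)

lemma monotoneOn_upperMass (hω : 0 < ω) (hωv : ω < vbar) :
    MonotoneOn (upperMass ω vbar) (Ioo 0 1) := by
  have hvbar : 0 < vbar := hω.trans hωv
  refine MonotoneOn.of_inter_Iic_of_inter_Ici (c := 2 - vbar / ω) ?_ ?_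
  · rintro ξ ⟨-, hξc⟩ ξ' ⟨⟨-, h1'⟩, hξ'c⟩ h
    rw [upperMass_of_ge hvbar ((le_two_sub_div_iff hω).1 hξc),
      upperMass_of_ge hvbar ((le_two_sub_div_iff hω).1 hξ'c)]
    gcongr
  · rintro ξ ⟨⟨-, h1⟩, hξc⟩ ξ' ⟨⟨-, h1'⟩, hξ'c⟩ h
    rw [upperMass_of_le hω h1 ((two_sub_div_le_iff hω).1 hξc),
      upperMass_of_le hω h1' ((two_sub_div_le_iff hω).1 hξ'c)]
    gcongr
    · exact div_pos hvbar (mul_pos (by linarith) hω)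
    · exact mul_pos (by linarith) hω

lemma sub_log_two_sub_le {c : ℝ} (h0 : 0 < c) (h1 : c < 1) :
    1 - c - log (2 - c) ≤ log c + (1 - c) / c := by
  have h2 : 0 < 2 - c := by linarith
  have hlog := neg_log_mul_two_sub_le h0 (by linarith)
  rw [log_mul h0.ne' h2.ne'] at hlog
  have hle : (1 - c) ^ 2 / (c * (2 - c)) ≤ (1 - c) ^ 2 / c :=
    div_le_div_of_nonneg_left (sq_nonneg _) h0 (by nlinarith)
  have e : (1 - c) ^ 2 / c = (1 - c) / c - (1 - c) := by
    field_simp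
  linarith

lemma antitoneOn_totalMass (hω : 0 < ω) (hωv : ω < vbar) :
    AntitoneOn (totalMass ω vbar) (Ioo 0 1) := by
  have hvbar : 0 < vbar := hω.trans hωv
  set c := 2 - vbar / ω with hc_def
  refine AntitoneOn.of_inter_Iic_of_inter_Ici (c := c) ?_ ?_
  · rcases le_or_gt c 0 with hc0 | hc0
    · exact fun ξ hξ ↦ absurd (hξ.2.trans hc0) hξ.1.1.not_ge
    have hc1 : c < 1 := by
      have : 1 < vbar / ω := (one_lt_div hω).2 hωv
      linarith
    refine ((antitoneOn_sub_log_div_one_sub hc1 (sub_log_two_sub_le hc0 hc1)).mono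
      fun ξ hξ ↦ ⟨hξ.1.1, hξ.2⟩).congr fun ξ hξ ↦ ?_
    have h1 : 1 - ξ ≠ 0 := (sub_pos.2 hξ.1.2).ne'
    rw [totalMass_of_ge hω hωv hξ.1 ((le_two_sub_div_iff hω).1 hξ.2), hc_def,
      show 2 - (2 - vbar / ω) = vbar / ω by ring, log_div hvbar.ne' hω.ne',
      log_mul hξ.1.1.ne' hvbar.ne']
    field_simp
    ring
  · rintro ξ ⟨hξ, hξc⟩ ξ' ⟨hξ', hξ'c⟩ h
    have key := antitoneOn_neg_log_two_sub_sub_log_mul_div hξ hξ' h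
    rw [totalMass_of_le hω hξ ((two_sub_div_le_iff hω).1 hξc),
      totalMass_of_le hω hξ' ((two_sub_div_le_iff hω).1 hξ'c),
      log_mul hω.ne' (by linarith [hξ.2] : (0 : ℝ) < 2 - ξ).ne',
      log_mul hω.ne' (by linarith [hξ'.2] : (0 : ℝ) < 2 - ξ').ne']
    dsimp only at key
    linarith

lemma monotoneOn_inv_totalMass (hω : 0 < ω) (hωv : ω < vbar) :
    MonotoneOn (fun ξ ↦ (totalMass ω vbar ξ)⁻¹) (Ioo 0 1) :=
  fun _ hξ _ hξ' h ↦ inv_anti₀ (totalMass_pos hω hωv hξ') (antitoneOn_totalMass hω hωv hξ hξ' h)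

lemma antitoneOn_inv_totalMass_mul_lowerMass (hω : 0 < ω) (hωv : ω < vbar) :
    AntitoneOn (fun ξ ↦ (totalMass ω vbar ξ)⁻¹ * lowerMass ω vbar ξ) (Ioo 0 1) := by
  intro ξ hξ ξ' hξ' h
  have hsplit : ∀ ξ ∈ Ioo (0 : ℝ) 1, (totalMass ω vbar ξ)⁻¹ * lowerMass ω vbar ξ =
      1 - (totalMass ω vbar ξ)⁻¹ * upperMass ω vbar ξ := fun ξ hξ ↦ by
    have := (totalMass_pos hω hωv hξ).ne'
    rw [totalMass] at this ⊢
    field_simp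
    ring
  dsimp only
  rw [hsplit ξ hξ, hsplit ξ' hξ', sub_le_sub_iff_left]
  exact mul_le_mul (monotoneOn_inv_totalMass hω hωv hξ hξ' h)
    (monotoneOn_upperMass hω hωv hξ hξ' h) (upperMass_nonneg hω hωv hξ.2)
    (inv_nonneg.2 (totalMass_pos hω hωv hξ').le)

end QuantilePricing

/-- Monotone comparative statics of the optimal randomized pricing mechanism under the quantile
ambiguity set: a higher conversion rate `ξ‡ ≥ ξ†` yields a price distribution whose cdf `q_{ξ‡}`
is pointwise at most `q_{ξ†}`, i.e., it stochastically dominates the one for `ξ†`. -/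
theorem stmt16 (vbar ω : ℝ) (hω0 : 0 < ω) (hωv : ω < vbar)
    (phat : ℝ → ℝ) (hphat : ∀ ξ, phat ξ = min ((2 - ξ) * ω) vbar)
    (r : ℝ → ℝ)
    (hr : ∀ ξ ∈ Ioo (0 : ℝ) 1,
      ((2 - ξ) * ω < vbar →
        r ξ = (Real.log vbar - Real.log (ω * (2 - ξ)) -
          Real.log (ξ * (2 - ξ)) / (1 - ξ) + 1)⁻¹) ∧
      (vbar ≤ (2 - ξ) * ω →
        r ξ = ((vbar - ω) / ((1 - ξ) * ω) +
          (Real.log ω - Real.log (ξ * vbar)) / (1 - ξ))⁻¹))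
    (q : ℝ → ℝ → ℝ)
    (hq : ∀ ξ ∈ Ioo (0 : ℝ) 1, ∀ v : ℝ,
      q ξ v = if v < ξ * phat ξ then 0
        else if v < ω then (r ξ / (1 - ξ)) * Real.log (v / (ξ * phat ξ))
        else if v < phat ξ then 1 - r ξ * Real.log (vbar / phat ξ)
        else 1 - r ξ * Real.log (vbar / v)) :
    ∀ ξd ξdd : ℝ, ξd ∈ Ioo (0 : ℝ) 1 → ξdd ∈ Ioo (0 : ℝ) 1 → ξd ≤ ξdd →
      ∀ v ∈ Icc (0 : ℝ) vbar, q ξdd v ≤ q ξd v := by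
  intro ξ ξ' hξ hξ' hle v hv
  obtain rfl : phat = capPrice ω vbar := funext hphat
  have hr' : ∀ ξ ∈ Ioo (0 : ℝ) 1, r ξ = (totalMass ω vbar ξ)⁻¹ := by
    intro ξ hξ
    rcases lt_or_ge ((2 - ξ) * ω) vbar with h | h
    · rw [(hr ξ hξ).1 h, totalMass_of_le hω0 hξ h.le]
    · rw [(hr ξ hξ).2 h, totalMass_of_ge hω0 hωv hξ h]
  have hr_nonneg : 0 ≤ r ξ := hr' ξ hξ ▸ inv_nonneg.2 (totalMass_pos hω0 hωv hξ).le
  have hmass : ∀ ξ ∈ Ioo (0 : ℝ) 1, r ξ / (1 - ξ) * log (ω / (ξ * capPrice ω vbar ξ)) =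
      (totalMass ω vbar ξ)⁻¹ * lowerMass ω vbar ξ := by
    intro ξ hξ
    rw [hr' ξ hξ, lowerMass]
    ring
  rw [hq ξ hξ, hq ξ' hξ']
  refine pricingCdf_le_pricingCdf (mul_pos hξ.1 (hω0.trans (lt_capPrice hω0 hωv hξ.2)))
    (monotoneOn_mul_capPrice hω0.le (hω0.trans hωv).le ⟨hξ.1.le, hξ.2.le⟩ ⟨hξ'.1.le, hξ'.2.le⟩ hle)
    (mul_capPrice_lt hω0 hξ'.1.le hξ'.2).le (capPrice_antitone hω0.le hle) capPrice_le hv.2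
    (div_nonneg hr_nonneg (sub_pos.2 hξ.2).le) hr_nonneg ?_ ?_
  · rw [hr' ξ hξ, hr' ξ' hξ']
    exact monotoneOn_inv_totalMass hω0 hωv hξ hξ' hle
  · rw [hmass ξ hξ, hmass ξ' hξ']
    exact antitoneOn_inv_totalMass_mul_lowerMass hω0 hωv hξ hξ' hle
end

section
/- Fix 0 < μ < v̄, an integer n ≥ 1, prices 0 < v₁ ≤ v₂ ≤ ⋯ ≤ vₙ ≤ v̄ with v_{n+1} := v̄, and probabilities x₁,…,xₙ ≥ 0 with Σᵢxᵢ = 1. Then the worst-case expected revenue over the mean ambiguity set, inf_{F ∈ 𝓕_mean} Σ_{i=1}^n vᵢxᵢF([vᵢ, v̄]), equals the optimal value of the finite linear program: maximize λ₀ over λ₀ ∈ ℝ and λ₁ ≥ 0 subject to λ₀ + λ₁(v_j − μ) ≤ Σ_{i=1}^{j−1} vᵢxᵢ for all j = 1,…,n+1 (where the sum over an empty index range is 0). -/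
open MeasureTheory Set

noncomputable section

/-- The mean ambiguity set: probability measures on `[0, v̄]` with mean at least `μ`. -/
def Fmean (μ vbar : ℝ) : Set (Measure ℝ) :=
  {F | IsProbabilityMeasure F ∧ F (Icc (0 : ℝ) vbar) = 1 ∧ μ ≤ ∫ t, t ∂F}

/-!
A buyer of value `y` pays `revenueAt y = ∑_{vᵢ ≤ y} vᵢ xᵢ`, and the revenue of `F` is its integral.
Write `c j = ∑_{i < j} vᵢ xᵢ`. If `(t, l)` is dual feasible then `t + l (y - μ) ≤ c j ≤ revenueAt y`
for the first level `v j ≥ y`; integrating against `F` with mean `≥ μ` gives weak duality.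

Conversely, a two-point law on levels `v j, v k` with mean `≥ μ` is approached from inside the
ambiguity set by moving its atoms slightly below the prices (where the buyer no longer buys them)
and adding a vanishing atom at `v̄`, so the infimum `I` is at most `p c j + (1 - p) c k`. With a
single moment constraint this already makes `I` dual feasible: a multiplier `l` must separate the
ratios `(c j - I) / (v j - μ)` of the levels below `μ` from those above, and comparing one of each
is exactly the bound on their mixture of mean `μ`.
-/

open Filter Topology

theorem exists_nonneg_between_of_finite {A B : Set ℝ} (hA : A.Finite)
    (hAB : ∀ a ∈ A, ∀ b ∈ B, a ≤ b) (hB : ∀ b ∈ B, 0 ≤ b) :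
    ∃ l, 0 ≤ l ∧ (∀ a ∈ A, a ≤ l) ∧ ∀ b ∈ B, l ≤ b := by
  have hbdd := (hA.insert 0).bddAbove
  refine ⟨sSup (insert 0 A), le_csSup hbdd (mem_insert _ _),
    fun a ha => le_csSup hbdd (mem_insert_of_mem _ ha),
    fun b hb => csSup_le (insert_nonempty _ _) ?_⟩
  rintro a (rfl | ha)
  exacts [hB b hb, hAB a ha b hb]

theorem exists_multiplier_of_le_mixtures {ι : Type*} (J : Finset ι) (a c : ι → ℝ) (P : ℝ)
    (h : ∀ j ∈ J, ∀ k ∈ J, ∀ p : ℝ, 0 ≤ p → p ≤ 1 → 0 ≤ p * a j + (1 - p) * a k →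
      P ≤ p * c j + (1 - p) * c k) :
    ∃ l, 0 ≤ l ∧ ∀ j ∈ J, P + l * a j ≤ c j := by
  have hpure : ∀ j ∈ J, 0 ≤ a j → P ≤ c j := fun j hj ha => by
    simpa using h j hj j hj 1 zero_le_one le_rfl (by simpa using ha)
  set r : ι → ℝ := fun j => (c j - P) / a j
  have hcross : ∀ k ∈ J, a k < 0 → ∀ j ∈ J, 0 < a j → r k ≤ r j := by
    intro k hk hak j hj haj
    -- the mixture of `j` and `k` whose mean is exactly zero
    have hd : 0 < a j - a k := by linarith
    have hmix := h j hj k hk (-a k / (a j - a k)) (div_nonneg (by linarith) hd.le)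
      ((div_le_one hd).2 (by linarith)) (le_of_eq (by field_simp; ring))
    have hval : -a k / (a j - a k) * c j + (1 - -a k / (a j - a k)) * c k
        = (a j * c k - a k * c j) / (a j - a k) := by field_simp; ring
    rw [hval, le_div_iff₀ hd] at hmix
    simp only [r]
    rw [div_le_iff_of_neg hak, div_mul_eq_mul_div, div_le_iff₀ haj]
    linarith
  obtain ⟨l, hl0, hlow, hup⟩ := exists_nonneg_between_of_finite
    (A := r '' {j | j ∈ J ∧ a j < 0}) (B := r '' {j | j ∈ J ∧ 0 < a j})
    ((J.finite_toSet.subset fun _ hj => hj.1).image r)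
    (by rintro _ ⟨k, ⟨hk, hak⟩, rfl⟩ _ ⟨j, ⟨hj, haj⟩, rfl⟩; exact hcross k hk hak j hj haj)
    (fun _ ⟨j, ⟨hj, haj⟩, hr⟩ => hr ▸ div_nonneg (sub_nonneg.2 (hpure j hj haj.le)) haj.le)
  refine ⟨l, hl0, fun j hj => ?_⟩
  rcases lt_trichotomy (a j) 0 with hneg | hzero | hpos
  · have := hlow _ (mem_image_of_mem r ⟨hj, hneg⟩)
    rw [div_le_iff_of_neg hneg] at this
    linarith
  · simpa [hzero] using hpure j hj hzero.ge
  · have := hup _ (mem_image_of_mem r ⟨hj, hpos⟩)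
    rw [le_div_iff₀ hpos] at this
    linarith

def revenueAt (n : ℕ) (v x : ℕ → ℝ) (vbar y : ℝ) : ℝ :=
  ∑ i ∈ Finset.Icc 1 n, (Icc (v i) vbar).indicator (fun _ => v i * x i) y

section Revenue

variable {n : ℕ} {v x : ℕ → ℝ} {vbar : ℝ}

theorem revenueAt_eq_sum_filter (y : ℝ) :
    revenueAt n v x vbar y = ∑ i ∈ Finset.Icc 1 n with y ∈ Icc (v i) vbar, v i * x i :=
  Finset.sum_indicator_eq_sum_filter _ _ _ _

theorem integrable_revenueAt (F : Measure ℝ) [IsFiniteMeasure F] :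
    Integrable (revenueAt n v x vbar) F :=
  integrable_finsetSum _ fun _ _ => (integrable_const _).indicator measurableSet_Icc

theorem integral_revenueAt (F : Measure ℝ) [IsFiniteMeasure F] :
    ∫ y, revenueAt n v x vbar y ∂F =
      ∑ i ∈ Finset.Icc 1 n, v i * x i * (F (Icc (v i) vbar)).toReal := by
  unfold revenueAt
  rw [integral_finsetSum _ fun _ _ => (integrable_const _).indicator measurableSet_Icc]
  refine Finset.sum_congr rfl fun i _ => ?_
  rw [integral_indicator_const _ measurableSet_Icc, smul_eq_mul, measureReal_def, mul_comm]

variable (hw : ∀ i ∈ Finset.Icc 1 n, 0 ≤ v i * x i)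
include hw

theorem revenueAt_nonneg (y : ℝ) : 0 ≤ revenueAt n v x vbar y := by
  rw [revenueAt_eq_sum_filter]
  exact Finset.sum_nonneg fun i hi => hw i (Finset.mem_of_mem_filter i hi)

theorem revenueAt_le_sum (y : ℝ) : revenueAt n v x vbar y ≤ ∑ i ∈ Finset.Icc 1 n, v i * x i := by
  rw [revenueAt_eq_sum_filter]
  exact Finset.sum_le_sum_of_subset_of_nonneg (Finset.filter_subset _ _) fun i hi _ => hw i hi

theorem sum_le_revenueAt {m : ℕ} (hm : m ≤ n) {y : ℝ} (hy : y ≤ vbar)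
    (hvy : ∀ i ∈ Finset.Icc 1 m, v i ≤ y) :
    ∑ i ∈ Finset.Icc 1 m, v i * x i ≤ revenueAt n v x vbar y := by
  rw [revenueAt_eq_sum_filter]
  refine Finset.sum_le_sum_of_subset_of_nonneg (fun i hi => ?_) fun i hi _ =>
    hw i (Finset.mem_of_mem_filter i hi)
  exact Finset.mem_filter.2 ⟨Finset.Icc_subset_Icc_right hm hi, hvy i hi, hy⟩

theorem revenueAt_le_sum_of_lt (hv : MonotoneOn v (Icc 1 (n + 1))) {j : ℕ}
    (hj : j ∈ Finset.Icc 1 (n + 1)) {y : ℝ} (hy : y < v j) :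
    revenueAt n v x vbar y ≤ ∑ i ∈ Finset.Icc 1 (j - 1), v i * x i := by
  rw [revenueAt_eq_sum_filter]
  refine Finset.sum_le_sum_of_subset_of_nonneg (fun i hi => ?_) fun i hi _ => ?_
  · obtain ⟨hi, hvi, -⟩ := Finset.mem_filter.1 hi
    rw [Finset.mem_Icc] at hi hj ⊢
    refine ⟨hi.1, Nat.le_sub_one_of_lt (lt_of_not_ge fun hji => ?_)⟩
    exact (hvi.trans_lt hy).not_ge (hv ⟨hj.1, hj.2⟩ ⟨hi.1, by omega⟩ hji)
  · rw [Finset.mem_Icc] at hi hj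
    exact hw i (Finset.mem_Icc.2 ⟨hi.1, by omega⟩)

end Revenue

section WeakDuality

variable {n : ℕ} {v x : ℕ → ℝ} {vbar μ t l : ℝ}
  (hw : ∀ i ∈ Finset.Icc 1 n, 0 ≤ v i * x i) (hvtop : v (n + 1) = vbar) (hl : 0 ≤ l)
  (hdual : ∀ j ∈ Finset.Icc 1 (n + 1),
    t + l * (v j - μ) ≤ ∑ i ∈ Finset.Icc 1 (j - 1), v i * x i)
include hw hvtop hl hdual

theorem dual_le_revenueAt {y : ℝ} (hy : y ≤ vbar) : t + l * (y - μ) ≤ revenueAt n v x vbar y := by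
  classical
  have hex : ∃ m, y ≤ v (m + 1) := ⟨n, hvtop ▸ hy⟩
  -- `m + 1` is the first price level at or above `y`
  set m := Nat.find hex
  have hvy : ∀ i ∈ Finset.Icc 1 m, v i ≤ y := fun i hi => by
    rw [Finset.mem_Icc] at hi
    have := Nat.find_min hex (show i - 1 < m by omega)
    rw [Nat.sub_add_cancel hi.1] at this
    exact (not_le.1 this).le
  have hmn : m ≤ n := Nat.find_min' hex (hvtop ▸ hy)
  calc t + l * (y - μ) ≤ t + l * (v (m + 1) - μ) := by gcongr; exact Nat.find_spec hex
    _ ≤ ∑ i ∈ Finset.Icc 1 m, v i * x i := hdual (m + 1) (by simp [hmn])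
    _ ≤ revenueAt n v x vbar y := sum_le_revenueAt hw hmn hy hvy

theorem dual_le_revenue {F : Measure ℝ} (hF : F ∈ Fmean μ vbar) :
    t ≤ ∑ i ∈ Finset.Icc 1 n, v i * x i * (F (Icc (v i) vbar)).toReal := by
  obtain ⟨hprob, hsupp, hmean⟩ := hF
  have hae : ∀ᵐ y ∂F, y ∈ Icc 0 vbar := by
    rw [ae_mem_iff_measure_eq measurableSet_Icc.nullMeasurableSet, hsupp, measure_univ]
  have hid : Integrable (fun y => y) F := by
    refine .of_bound measurable_id.aestronglyMeasurable vbar ?_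
    filter_upwards [hae] with y hy
    rw [Real.norm_eq_abs, abs_le]
    constructor <;> linarith [hy.1, hy.2]
  have hshift : Integrable (fun y => l * (y - μ)) F := (hid.sub (integrable_const μ)).const_mul l
  have hpt : ∀ᵐ y ∂F, t + l * (y - μ) ≤ revenueAt n v x vbar y := by
    filter_upwards [hae] with y hy
    exact dual_le_revenueAt hw hvtop hl hdual hy.2
  calc t ≤ t + l * (∫ y, y ∂F - μ) := le_add_of_nonneg_right (mul_nonneg hl (sub_nonneg.2 hmean))
    _ = ∫ y, (t + l * (y - μ)) ∂F := by
      rw [integral_add (integrable_const t) hshift, integral_const_mul,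
        integral_sub hid (integrable_const μ)]
      simp
    _ ≤ ∫ y, revenueAt n v x vbar y ∂F :=
      integral_mono_ae ((integrable_const t).add hshift) (integrable_revenueAt F) hpt
    _ = _ := integral_revenueAt F

end WeakDuality

section WeightedDiracs

variable {ι : Type*} [Fintype ι] (w y : ι → ℝ)

def weightedDiracs : Measure ℝ := ∑ m, ENNReal.ofReal (w m) • Measure.dirac (y m)

variable {w} (hw : ∀ m, 0 ≤ w m)
include hw

theorem integral_weightedDiracs (f : ℝ → ℝ) :
    ∫ t, f t ∂weightedDiracs w y = ∑ m, w m * f (y m) := by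
  rw [weightedDiracs, integral_finsetSum_measure fun m _ =>
    (integrable_dirac enorm_lt_top).smul_measure ENNReal.ofReal_ne_top]
  simp [integral_smul_measure, ENNReal.toReal_ofReal (hw _)]

theorem weightedDiracs_mem_Fmean {μ vbar : ℝ} (hw1 : ∑ m, w m = 1) (hy : ∀ m, y m ∈ Icc 0 vbar)
    (hmean : μ ≤ ∑ m, w m * y m) : weightedDiracs w y ∈ Fmean μ vbar := by
  have hfull : ∀ S : Set ℝ, (∀ m, y m ∈ S) → weightedDiracs w y S = 1 := fun S hS => by
    simp [weightedDiracs, Measure.finsetSum_apply, Measure.dirac_apply_of_mem (hS _),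
      ← ENNReal.ofReal_sum_of_nonneg fun m _ => hw m, hw1]
  exact ⟨⟨hfull univ fun _ => trivial⟩, hfull _ hy, by rwa [integral_weightedDiracs y hw]⟩

end WeightedDiracs

theorem dirac_mem_Fmean {μ vbar : ℝ} (hμ : μ ≤ vbar) (hvbar : 0 ≤ vbar) :
    Measure.dirac vbar ∈ Fmean μ vbar :=
  ⟨inferInstance, Measure.dirac_apply_of_mem ⟨hvbar, le_rfl⟩, by rwa [integral_dirac]⟩

theorem apply_mem_Icc_of_monotoneOn {n : ℕ} {v : ℕ → ℝ} (hv : MonotoneOn v (Icc 1 (n + 1)))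
    {j : ℕ} (hj : j ∈ Finset.Icc 1 (n + 1)) : v j ∈ Icc (v 1) (v (n + 1)) := by
  rw [Finset.mem_Icc] at hj
  exact ⟨hv ⟨le_rfl, by omega⟩ ⟨hj.1, hj.2⟩ hj.1, hv ⟨hj.1, hj.2⟩ ⟨by omega, le_rfl⟩ hj.2⟩

section Primal

variable {n : ℕ} {v x : ℕ → ℝ} {vbar μ : ℝ}
  (hw : ∀ i ∈ Finset.Icc 1 n, 0 ≤ v i * x i) (hv : MonotoneOn v (Icc 1 (n + 1)))
  (hvtop : v (n + 1) = vbar) (hμ : μ < vbar)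
  {j k : ℕ} (hj : j ∈ Finset.Icc 1 (n + 1)) (hk : k ∈ Finset.Icc 1 (n + 1))
  {p : ℝ} (hp0 : 0 ≤ p) (hp1 : p ≤ 1) (hmean : μ ≤ p * v j + (1 - p) * v k)
include hw hv hvtop hμ hj hk hp0 hp1 hmean

/-- Put the weights `p, 1 - p` just below the prices `v j, v k`, where the buyer does not buy
them, and repair the mean with a small weight `η` at `vbar`. -/
theorem exists_mem_Fmean_revenue_le {η : ℝ} (hη0 : 0 < η) (hη1 : η ≤ 1)
    (hηv : η * (vbar - μ) ≤ v 1) :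
    ∃ F ∈ Fmean μ vbar, ∑ i ∈ Finset.Icc 1 n, v i * x i * (F (Icc (v i) vbar)).toReal ≤
      p * ∑ i ∈ Finset.Icc 1 (j - 1), v i * x i + (1 - p) * ∑ i ∈ Finset.Icc 1 (k - 1), v i * x i
        + η * ∑ i ∈ Finset.Icc 1 n, v i * x i := by
  set δ := η * (vbar - μ)
  have hδ : 0 < δ := mul_pos hη0 (sub_pos.2 hμ)
  obtain ⟨hvj1, hvj⟩ := hvtop ▸ apply_mem_Icc_of_monotoneOn hv hj
  obtain ⟨hvk1, hvk⟩ := hvtop ▸ apply_mem_Icc_of_monotoneOn hv hk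
  set w : Fin 3 → ℝ := ![(1 - η) * p, (1 - η) * (1 - p), η]
  set y : Fin 3 → ℝ := ![v j - δ, v k - δ, vbar]
  have hw' : ∀ m, 0 ≤ w m := by
    intro m
    fin_cases m
    exacts [mul_nonneg (sub_nonneg.2 hη1) hp0, mul_nonneg (sub_nonneg.2 hη1) (sub_nonneg.2 hp1),
      hη0.le]
  have hy : ∀ m, y m ∈ Icc 0 vbar := by
    intro m
    fin_cases m <;>
      simp only [Fin.zero_eta, Fin.mk_one, Fin.reduceFinMk, Fin.isValue, Matrix.cons_val,
        Matrix.cons_val_zero, Matrix.cons_val_one, mem_Icc, y] <;>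
      constructor <;> linarith
  have hF : weightedDiracs w y ∈ Fmean μ vbar := by
    refine weightedDiracs_mem_Fmean y hw' (by simp [w, Fin.sum_univ_three]; ring) hy ?_
    simp only [Fin.sum_univ_three, Fin.isValue, Matrix.cons_val, w, y]
    nlinarith [mul_le_mul_of_nonneg_left hmean (sub_nonneg.2 hη1),
      mul_nonneg (mul_nonneg hη0.le hη0.le) (sub_pos.2 hμ).le]
  have := hF.1
  refine ⟨_, hF, ?_⟩
  rw [← integral_revenueAt, integral_weightedDiracs y hw', Fin.sum_univ_three]
  simp only [Fin.isValue, Matrix.cons_val, w, y]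
  have hG₁ := revenueAt_le_sum_of_lt (vbar := vbar) hw hv hj (sub_lt_self (v j) hδ)
  have hG₂ := revenueAt_le_sum_of_lt (vbar := vbar) hw hv hk (sub_lt_self (v k) hδ)
  have hG₃ := revenueAt_le_sum (vbar := vbar) hw vbar
  have hG₁₀ := revenueAt_nonneg (vbar := vbar) hw (v j - δ)
  have hG₂₀ := revenueAt_nonneg (vbar := vbar) hw (v k - δ)
  nlinarith [mul_le_mul_of_nonneg_left hG₁ hp0, mul_le_mul_of_nonneg_left hG₂ (sub_nonneg.2 hp1),
    mul_le_mul_of_nonneg_left hG₃ hη0.le, mul_nonneg (mul_nonneg hη0.le hp0) hG₁₀,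
    mul_nonneg (mul_nonneg hη0.le (sub_nonneg.2 hp1)) hG₂₀]

theorem iInf_revenue_le_mixture (hv1 : 0 < v 1) :
    (⨅ F : ↥(Fmean μ vbar), ∑ i ∈ Finset.Icc 1 n, v i * x i * (F.1 (Icc (v i) vbar)).toReal) ≤
      p * ∑ i ∈ Finset.Icc 1 (j - 1), v i * x i +
        (1 - p) * ∑ i ∈ Finset.Icc 1 (k - 1), v i * x i := by
  set m := p * ∑ i ∈ Finset.Icc 1 (j - 1), v i * x i +
    (1 - p) * ∑ i ∈ Finset.Icc 1 (k - 1), v i * x i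
  have hbdd : BddBelow (range fun F : ↥(Fmean μ vbar) =>
      ∑ i ∈ Finset.Icc 1 n, v i * x i * (F.1 (Icc (v i) vbar)).toReal) :=
    ⟨0, by
      rintro _ ⟨F, rfl⟩
      exact Finset.sum_nonneg fun i hi => mul_nonneg (hw i hi) ENNReal.toReal_nonneg⟩
  have htend : Tendsto (fun η => m + η * ∑ i ∈ Finset.Icc 1 n, v i * x i) (𝓝[>] 0) (𝓝 m) := by
    have hcont : Continuous fun η => m + η * ∑ i ∈ Finset.Icc 1 n, v i * x i := by fun_prop
    simpa using (hcont.tendsto 0).mono_left nhdsWithin_le_nhds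
  refine ge_of_tendsto htend ?_
  have hvμ : 0 < vbar - μ := sub_pos.2 hμ
  filter_upwards [Ioo_mem_nhdsGT (lt_min one_pos (div_pos hv1 hvμ))] with η ⟨hη0, hη⟩
  obtain ⟨F, hF, hrev⟩ := exists_mem_Fmean_revenue_le hw hv hvtop hμ hj hk hp0 hp1 hmean hη0
    (hη.le.trans (min_le_left _ _)) ((le_div_iff₀ hvμ).1 (hη.le.trans (min_le_right _ _)))
  exact (ciInf_le hbdd ⟨F, hF⟩).trans hrev

end Primal

theorem stmt17_general (μ vbar : ℝ) (hμv : μ < vbar)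
    (n : ℕ) (v x : ℕ → ℝ)
    (hv0 : 0 < v 1)
    (hmono : ∀ i, 1 ≤ i → i < n → v i ≤ v (i + 1))
    (hvn : v n ≤ vbar) (hvtop : v (n + 1) = vbar)
    (hx : ∀ i ∈ Finset.Icc 1 n, 0 ≤ x i) :
    (⨅ F : ↥(Fmean μ vbar),
        ∑ i ∈ Finset.Icc 1 n, v i * x i * (F.1 (Icc (v i) vbar)).toReal) =
      sSup {t : ℝ | ∃ l : ℝ, 0 ≤ l ∧
        ∀ j ∈ Finset.Icc 1 (n + 1),
          t + l * (v j - μ) ≤ ∑ i ∈ Finset.Icc 1 (j - 1), v i * x i} := by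
  have hv : MonotoneOn v (Icc 1 (n + 1)) := by
    refine monotoneOn_of_le_add_one ordConnected_Icc fun i _ hi hi1 => ?_
    rcases (Nat.lt_or_eq_of_le (Nat.le_of_succ_le_succ hi1.2)) with hin | rfl
    exacts [hmono i hi.1 hin, hvtop ▸ hvn]
  have hw : ∀ i ∈ Finset.Icc 1 n, 0 ≤ v i * x i := fun i hi => by
    have hi' : i ∈ Finset.Icc 1 (n + 1) := Finset.Icc_subset_Icc_right n.le_succ hi
    exact mul_nonneg (hv0.trans_le (apply_mem_Icc_of_monotoneOn hv hi').1).le (hx i hi)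
  have hvbar : 0 ≤ vbar :=
    hvtop ▸ hv0.le.trans (apply_mem_Icc_of_monotoneOn hv (j := n + 1) (by simp)).1
  have : Nonempty ↥(Fmean μ vbar) := ⟨⟨_, dirac_mem_Fmean hμv.le hvbar⟩⟩
  refine (IsGreatest.csSup_eq ⟨?_, ?_⟩).symm
  · exact exists_multiplier_of_le_mixtures _ (fun j => v j - μ) _ _ fun j hj k hk p hp0 hp1 hmean =>
      iInf_revenue_le_mixture hw hv hvtop hμv hj hk hp0 hp1 (by linarith) hv0
  · rintro t ⟨l, hl, hdual⟩
    exact le_ciInf fun F => dual_le_revenue hw hvtop hl hdual F.2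

/-- The worst-case expected revenue of an `n`-level mechanism over the mean ambiguity set equals
the value of the finite dual linear program. -/
theorem stmt17 (μ vbar : ℝ) (hμ : 0 < μ) (hμv : μ < vbar)
    (n : ℕ) (hn : 1 ≤ n) (v x : ℕ → ℝ)
    (hv0 : 0 < v 1)
    (hmono : ∀ i, 1 ≤ i → i < n → v i ≤ v (i + 1))
    (hvn : v n ≤ vbar) (hvtop : v (n + 1) = vbar)
    (hx : ∀ i ∈ Finset.Icc 1 n, 0 ≤ x i)
    (hsum : ∑ i ∈ Finset.Icc 1 n, x i = 1) :
    (⨅ F : ↥(Fmean μ vbar),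
        ∑ i ∈ Finset.Icc 1 n, v i * x i * (F.1 (Icc (v i) vbar)).toReal) =
      sSup {t : ℝ | ∃ l : ℝ, 0 ≤ l ∧
        ∀ j ∈ Finset.Icc 1 (n + 1),
          t + l * (v j - μ) ≤ ∑ i ∈ Finset.Icc 1 (j - 1), v i * x i} :=
  stmt17_general μ vbar hμv n v x hv0 hmono hvn hvtop hx
end
end

section
/- Fix 0 < μ < v̄. The infimum, over posted prices v₁ ∈ [0, v̄], of the worst-case regret sup_{F ∈ 𝓕_=μ} ( OPT(F) − v₁·F([v₁, v̄]) ) equals ( μ − v̄ + √( (v̄ − μ)(3μ + v̄) ) )/2, and it is attained at the price v₁ = v̄·( μ + v̄ − √( (v̄ − μ)(3μ + v̄) ) ) / (2μ). -/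
/-!
Fix a price `v ∈ (0, v̄)` and a law `F` with mean `μ`. Against a competing price `p ≥ v`,
Markov's inequality `p F[p, v̄] ≤ μ` bounds the regret by `μ (v̄ - v) / v̄`; against `p < v`,
bounding the identity on `[0, v̄]` by a step function with jumps at `p` and `v` bounds the mean,
hence `F[v, v̄]` from below, and the regret by `v (v̄ - μ) / (v̄ - v)`. The first bound is attained
by the law on `{0, v̄}`, the second in the limit by the laws on `{w, v̄}` with `w ↑ v`. The first
decreases and the second increases in `v`; they cross at the stated price, where both equal the
stated value. Prices above `μ` lose `μ` against the point mass at `μ`.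
-/

open MeasureTheory Set

noncomputable section

/-- Hindsight optimal revenue: `OPT(F) = sup_{p ∈ [0, v̄]} p · F([p, v̄])`. -/
def hindsightOpt (vbar : ℝ) (F : Measure ℝ) : ℝ :=
  ⨆ p : Icc (0 : ℝ) vbar, (p : ℝ) * (F (Icc (p : ℝ) vbar)).toReal

/-- The exact-mean ambiguity set: probability measures on `[0, v̄]` with mean exactly `μ`. -/
def FmeanEq (μ vbar : ℝ) : Set (Measure ℝ) :=
  {F | IsProbabilityMeasure F ∧ F (Icc (0 : ℝ) vbar) = 1 ∧ ∫ t, t ∂F = μ}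

/-- Worst-case regret of posting price `v1` over the exact-mean ambiguity set. -/
def worstRegret (μ vbar v1 : ℝ) : ℝ :=
  ⨆ F : ↥(FmeanEq μ vbar), (hindsightOpt vbar F.1 - v1 * (F.1 (Icc v1 vbar)).toReal)

open Filter Topology

section Support

variable {vbar : ℝ} {F : Measure ℝ} [IsProbabilityMeasure F]

lemma ae_mem_Icc_of_measure_eq_one (h : F (Icc 0 vbar) = 1) : ∀ᵐ x ∂F, x ∈ Icc 0 vbar :=
  (ae_iff_measure_eq measurableSet_Icc.nullMeasurableSet).2 (by rw [measure_univ]; exact h)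

lemma integrable_id_of_measure_Icc_eq_one (h : F (Icc 0 vbar) = 1) :
    Integrable (fun x : ℝ => x) F := by
  refine Integrable.of_bound measurable_id.aestronglyMeasurable vbar ?_
  filter_upwards [ae_mem_Icc_of_measure_eq_one h] with x hx
  rw [Real.norm_eq_abs, abs_of_nonneg hx.1]
  exact hx.2

lemma mul_measure_Icc_le_integral (h : F (Icc 0 vbar) = 1) {p : ℝ} (hp : 0 ≤ p) :
    p * (F (Icc p vbar)).toReal ≤ ∫ x, x ∂F := by
  have hmono : (F (Icc p vbar)).toReal ≤ F.real {x | p ≤ x} :=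
    measureReal_mono fun x hx => hx.1
  calc p * (F (Icc p vbar)).toReal ≤ p * F.real {x | p ≤ x} := by gcongr
    _ ≤ ∫ x, x ∂F := mul_meas_ge_le_integral_of_nonneg
        ((ae_mem_Icc_of_measure_eq_one h).mono fun x hx => hx.1)
        (integrable_id_of_measure_Icc_eq_one h) p

lemma integral_le_of_measure_Icc_eq_one (h : F (Icc 0 vbar) = 1) {p v : ℝ} (hpv : p ≤ v) :
    ∫ x, x ∂F ≤ p + (v - p) * (F (Icc p vbar)).toReal + (vbar - v) * (F (Icc v vbar)).toReal := by
  have hint₁ : Integrable ((Icc p vbar).indicator fun _ => v - p) F :=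
    (integrable_const _).indicator measurableSet_Icc
  have hint₂ : Integrable ((Icc v vbar).indicator fun _ => vbar - v) F :=
    (integrable_const _).indicator measurableSet_Icc
  have hint₀ : Integrable (fun x => p + (Icc p vbar).indicator (fun _ => v - p) x) F :=
    (integrable_const p).add hint₁
  have hle : ∀ᵐ x ∂F, x ≤ p + (Icc p vbar).indicator (fun _ => v - p) x +
      (Icc v vbar).indicator (fun _ => vbar - v) x := by
    filter_upwards [ae_mem_Icc_of_measure_eq_one h] with x hx
    simp only [indicator, mem_Icc, hx.2, and_true]
    split_ifs <;> linarith [hx.2]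
  calc ∫ x, x ∂F ≤ ∫ x, p + (Icc p vbar).indicator (fun _ => v - p) x +
      (Icc v vbar).indicator (fun _ => vbar - v) x ∂F :=
        integral_mono_ae (integrable_id_of_measure_Icc_eq_one h) (hint₀.add hint₂) hle
    _ = _ := by
        rw [integral_add hint₀ hint₂,
          integral_add (integrable_const p) hint₁, integral_const,
          integral_indicator_const _ measurableSet_Icc,
          integral_indicator_const _ measurableSet_Icc]
        simp only [probReal_univ, smul_eq_mul, one_mul]
        simp only [measureReal_def]
        ring

end Support

lemma le_hindsightOpt {vbar p : ℝ} {F : Measure ℝ} [IsProbabilityMeasure F]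
    (hp : p ∈ Icc 0 vbar) :
    p * (F (Icc p vbar)).toReal ≤ hindsightOpt vbar F := by
  refine le_ciSup (f := fun p : Icc (0 : ℝ) vbar => (p : ℝ) * (F (Icc (p : ℝ) vbar)).toReal)
    ⟨vbar, ?_⟩ ⟨p, hp⟩
  rintro _ ⟨q, rfl⟩
  calc (q : ℝ) * (F (Icc (q : ℝ) vbar)).toReal ≤ q * 1 := by
        gcongr
        · exact q.2.1
        · exact measureReal_le_one
    _ ≤ vbar := by simpa using q.2.2

lemma hindsightOpt_le_mean {μ vbar : ℝ} {F : Measure ℝ} (hF : F ∈ FmeanEq μ vbar) :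
    hindsightOpt vbar F ≤ μ := by
  obtain ⟨_, hsupp, hmean⟩ := hF
  have hμ : 0 ≤ μ := hmean ▸ integral_nonneg_of_ae
    ((ae_mem_Icc_of_measure_eq_one hsupp).mono fun x hx => hx.1)
  exact Real.iSup_le (fun p => hmean ▸ mul_measure_Icc_le_integral hsupp p.2.1) hμ

lemma le_worstRegret {μ vbar p v : ℝ} {F : Measure ℝ} (hF : F ∈ FmeanEq μ vbar)
    (hp : p ∈ Icc 0 vbar) (hv : 0 ≤ v) :
    p * (F (Icc p vbar)).toReal - v * (F (Icc v vbar)).toReal ≤ worstRegret μ vbar v := by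
  have := hF.1
  have hbdd : BddAbove (range fun G : FmeanEq μ vbar =>
      hindsightOpt vbar G.1 - v * (G.1 (Icc v vbar)).toReal) := by
    refine ⟨μ, ?_⟩
    rintro _ ⟨G, rfl⟩
    have := hindsightOpt_le_mean G.2
    have : 0 ≤ v * (G.1 (Icc v vbar)).toReal := by positivity
    dsimp only
    linarith
  calc _ ≤ hindsightOpt vbar F - v * (F (Icc v vbar)).toReal := by
        gcongr; exact le_hindsightOpt hp
    _ ≤ worstRegret μ vbar v := le_ciSup hbdd ⟨F, hF⟩

def twoPointOfMean (μ a b : ℝ) : Measure ℝ :=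
  ENNReal.ofReal ((b - μ) / (b - a)) • Measure.dirac a +
    ENNReal.ofReal ((μ - a) / (b - a)) • Measure.dirac b

section TwoPoint

variable {μ a b : ℝ} (haμ : a ≤ μ) (hμb : μ ≤ b) (hab : a < b)
include haμ hμb hab

lemma twoPointOfMean_apply (s : Set ℝ) :
    (twoPointOfMean μ a b s).toReal =
      s.indicator (fun _ => (b - μ) / (b - a)) a + s.indicator (fun _ => (μ - a) / (b - a)) b := by
  have h₁ : 0 ≤ (b - μ) / (b - a) := div_nonneg (by linarith) (by linarith)
  have h₂ : 0 ≤ (μ - a) / (b - a) := div_nonneg (by linarith) (by linarith)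
  simp only [twoPointOfMean, Measure.add_apply, Measure.smul_apply, smul_eq_mul,
    Measure.dirac_apply]
  by_cases ha : a ∈ s <;> by_cases hb : b ∈ s <;>
    simp [ha, hb, ENNReal.toReal_add, h₁, h₂]

lemma twoPointOfMean_apply_of_mem {s : Set ℝ} (ha : a ∈ s) (hb : b ∈ s) :
    (twoPointOfMean μ a b s).toReal = 1 := by
  rw [twoPointOfMean_apply haμ hμb hab, indicator_of_mem ha, indicator_of_mem hb,
    ← add_div, div_eq_one_iff_eq (sub_pos.2 hab).ne']
  ring

lemma isProbabilityMeasure_twoPointOfMean : IsProbabilityMeasure (twoPointOfMean μ a b) := by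
  constructor
  rw [← ENNReal.toReal_eq_one_iff]
  exact twoPointOfMean_apply_of_mem haμ hμb hab (mem_univ a) (mem_univ b)

lemma integral_twoPointOfMean : ∫ x, x ∂twoPointOfMean μ a b = μ := by
  have h₁ : 0 ≤ (b - μ) / (b - a) := div_nonneg (by linarith) (by linarith)
  have h₂ : 0 ≤ (μ - a) / (b - a) := div_nonneg (by linarith) (by linarith)
  rw [twoPointOfMean, integral_add_measure, integral_smul_measure, integral_smul_measure,
    integral_dirac, integral_dirac, ENNReal.toReal_ofReal h₁, ENNReal.toReal_ofReal h₂]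
  · have := (sub_pos.2 hab).ne'
    simp only [smul_eq_mul]
    field_simp
    ring
  all_goals exact (integrable_dirac (by finiteness)).smul_measure ENNReal.ofReal_ne_top

end TwoPoint

lemma twoPointOfMean_mem_FmeanEq {μ a vbar : ℝ} (ha : 0 ≤ a) (haμ : a ≤ μ) (hμv : μ < vbar) :
    twoPointOfMean μ a vbar ∈ FmeanEq μ vbar := by
  have hav : a < vbar := by linarith
  refine ⟨isProbabilityMeasure_twoPointOfMean haμ hμv.le hav, ?_,
    integral_twoPointOfMean haμ hμv.le hav⟩
  rw [← ENNReal.toReal_eq_one_iff]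
  exact twoPointOfMean_apply_of_mem haμ hμv.le hav ⟨ha, hav.le⟩ ⟨by linarith, le_rfl⟩

def underpricingRegret (μ vbar v : ℝ) : ℝ := μ * (vbar - v) / vbar

def overpricingRegret (μ vbar v : ℝ) : ℝ := v * (vbar - μ) / (vbar - v)

section Regret

variable {μ vbar v : ℝ}

lemma underpricingRegret_le_worstRegret (hμ : 0 ≤ μ) (hμv : μ < vbar) (hv : v ∈ Icc 0 vbar) :
    underpricingRegret μ vbar v ≤ worstRegret μ vbar v := by
  have hvbar : 0 < vbar := hμ.trans_lt hμv
  have hF := twoPointOfMean_mem_FmeanEq le_rfl hμ hμv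
  have hprob := hF.1
  have hq : ∀ x, 0 < x → x ≤ vbar → ((twoPointOfMean μ 0 vbar) (Icc x vbar)).toReal = μ / vbar := by
    intro x hx hxv
    rw [twoPointOfMean_apply hμ hμv.le hvbar, indicator_of_notMem fun h => hx.not_ge h.1,
      indicator_of_mem (show vbar ∈ Icc x vbar from ⟨hxv, le_rfl⟩), sub_zero, sub_zero, zero_add]
  refine le_trans (le_of_eq ?_) (le_worstRegret hF ⟨hvbar.le, le_rfl⟩ hv.1)
  rw [hq vbar hvbar le_rfl]
  rcases hv.1.eq_or_lt with rfl | hv0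
  · simp only [underpricingRegret, sub_zero, zero_mul]
    field_simp
  · rw [hq v hv0 hv.2]
    unfold underpricingRegret
    field_simp

lemma le_worstRegret_of_lt {a : ℝ} (ha : 0 ≤ a) (haμ : a ≤ μ) (hμv : μ < vbar) (hav : a < v)
    (hv : v ≤ vbar) :
    a - v * ((μ - a) / (vbar - a)) ≤ worstRegret μ vbar v := by
  have hF := twoPointOfMean_mem_FmeanEq ha haμ hμv
  have hprob := hF.1
  have hav' : a < vbar := by linarith
  refine le_trans (le_of_eq ?_) (le_worstRegret hF ⟨ha, hav'.le⟩ (ha.trans hav.le))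
  rw [twoPointOfMean_apply_of_mem (s := Icc a vbar) haμ hμv.le hav' ⟨le_rfl, hav'.le⟩
      ⟨hav'.le, le_rfl⟩, twoPointOfMean_apply haμ hμv.le hav',
    indicator_of_notMem (by simp [hav.not_ge]),
    indicator_of_mem (by simp [hv])]
  ring

lemma mean_le_worstRegret (hμ : 0 ≤ μ) (hμv : μ < v) (hv : v ≤ vbar) :
    μ ≤ worstRegret μ vbar v := by
  simpa using le_worstRegret_of_lt hμ le_rfl (hμv.trans_le hv) hμv hv

lemma overpricingRegret_le_worstRegret (hv : 0 < v) (hvμ : v ≤ μ) (hμv : μ < vbar) :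
    overpricingRegret μ vbar v ≤ worstRegret μ vbar v := by
  have hcont : ContinuousAt (fun a => a - v * ((μ - a) / (vbar - a))) v := by
    have : vbar - v ≠ 0 := by linarith
    fun_prop (disch := assumption)
  have hlim := hcont.tendsto.mono_left (nhdsWithin_le_nhds (s := Iio v))
  have hval : v - v * ((μ - v) / (vbar - v)) = overpricingRegret μ vbar v := by
    unfold overpricingRegret
    field_simp [(show vbar - v ≠ 0 by linarith)]
    ring
  rw [hval] at hlim
  refine le_of_tendsto hlim ?_
  filter_upwards [Ioo_mem_nhdsLT hv] with a ha
  exact le_worstRegret_of_lt ha.1.le (ha.2.le.trans hvμ) hμv ha.2 (by linarith)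

end Regret

section Upper

variable {μ vbar v : ℝ}

lemma regret_le_max {F : Measure ℝ} (hF : F ∈ FmeanEq μ vbar) (hv : 0 < v)
    (hvv : v < vbar) :
    hindsightOpt vbar F - v * (F (Icc v vbar)).toReal ≤
      max (underpricingRegret μ vbar v) (overpricingRegret μ vbar v) := by
  obtain ⟨hprob, hsupp, hmean⟩ := hF
  set t := (F (Icc v vbar)).toReal
  have : Nonempty (Icc 0 vbar) := ⟨⟨0, le_rfl, (hv.trans hvv).le⟩⟩
  rw [sub_le_iff_le_add]
  refine ciSup_le fun ⟨p, hp⟩ => ?_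
  set s := (F (Icc p vbar)).toReal
  show p * s ≤ _
  have hs : s ≤ 1 := measureReal_le_one
  rcases le_or_gt v p with hvp | hpv
  · have hst : s ≤ t := measureReal_mono (Icc_subset_Icc_left hvp)
    have hps : p * s ≤ μ := hmean ▸ mul_measure_Icc_le_integral hsupp hp.1
    have hp0 : 0 < p := hv.trans_le hvp
    have hμ : 0 ≤ μ := (mul_nonneg hp.1 ENNReal.toReal_nonneg).trans hps
    have : p * s - v * t ≤ underpricingRegret μ vbar v :=
      calc p * s - v * t ≤ (p - v) * s := by nlinarith [mul_le_mul_of_nonneg_left hst hv.le]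
        _ ≤ (p - v) * (μ / p) :=
          mul_le_mul_of_nonneg_left ((le_div_iff₀' hp0).2 hps) (sub_nonneg.2 hvp)
        _ = μ - μ * v / p := by field_simp
        _ ≤ μ - μ * v / vbar := by gcongr; exact hp.2
        _ = underpricingRegret μ vbar v := by
          unfold underpricingRegret; field_simp [(hv.trans hvv).ne']
    linarith [le_max_left (underpricingRegret μ vbar v) (overpricingRegret μ vbar v)]
  · have hmean' : μ ≤ p + (v - p) * s + (vbar - v) * t :=
      hmean ▸ integral_le_of_measure_Icc_eq_one hsupp hpv.le
    have : p * s - v * t ≤ overpricingRegret μ vbar v := by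
      unfold overpricingRegret
      rw [le_div_iff₀ (by linarith)]
      nlinarith [mul_nonneg hv.le (sub_nonneg.2 hmean'),
        mul_nonneg (sub_nonneg.2 hs) (add_nonneg (mul_nonneg (sub_nonneg.2 hvv.le) hp.1)
          (mul_nonneg hv.le (sub_nonneg.2 hpv.le))),
        mul_nonneg (sub_nonneg.2 hpv.le) (sub_nonneg.2 hvv.le)]
    linarith [le_max_right (underpricingRegret μ vbar v) (overpricingRegret μ vbar v)]

lemma worstRegret_le_max (hμ : 0 ≤ μ) (hv : 0 < v) (hvv : v < vbar) :
    worstRegret μ vbar v ≤ max (underpricingRegret μ vbar v) (overpricingRegret μ vbar v) :=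
  Real.iSup_le (fun F => regret_le_max F.2 hv hvv)
    (le_max_of_le_left (by unfold underpricingRegret; have := hv.trans hvv; positivity))

end Upper

section MinimaxPrice

variable {μ vbar v val : ℝ}

lemma minimaxPrice_mem_Ioo (hμ : 0 < μ) (hμv : μ < vbar)
    (hv : v = vbar * (μ + vbar - √((vbar - μ) * (3 * μ + vbar))) / (2 * μ)) : v ∈ Ioo 0 vbar := by
  have h₁ : vbar - μ < √((vbar - μ) * (3 * μ + vbar)) := by
    rw [Real.lt_sqrt (by linarith)]; nlinarith
  have h₂ : √((vbar - μ) * (3 * μ + vbar)) < μ + vbar := by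
    rw [Real.sqrt_lt' (by linarith)]; nlinarith
  subst hv
  constructor
  · have := hμ.trans hμv
    apply div_pos (mul_pos this (by linarith)) (by linarith)
  · rw [div_lt_iff₀ (by linarith)]
    nlinarith

lemma underpricingRegret_minimaxPrice (hμ : 0 < μ) (hμv : μ < vbar)
    (hv : v = vbar * (μ + vbar - √((vbar - μ) * (3 * μ + vbar))) / (2 * μ))
    (hval : val = (μ - vbar + √((vbar - μ) * (3 * μ + vbar))) / 2) :
    underpricingRegret μ vbar v = val := by
  have := (hμ.trans hμv).ne'
  subst hv hval
  unfold underpricingRegret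
  field_simp
  ring

lemma overpricingRegret_minimaxPrice (hμ : 0 < μ) (hμv : μ < vbar)
    (hv : v = vbar * (μ + vbar - √((vbar - μ) * (3 * μ + vbar))) / (2 * μ))
    (hval : val = (μ - vbar + √((vbar - μ) * (3 * μ + vbar))) / 2) :
    overpricingRegret μ vbar v = val := by
  have hvv := (minimaxPrice_mem_Ioo hμ hμv hv).2
  have hS := Real.sq_sqrt (show 0 ≤ (vbar - μ) * (3 * μ + vbar) by nlinarith)
  generalize √((vbar - μ) * (3 * μ + vbar)) = S at hv hval hS
  unfold overpricingRegret
  rw [div_eq_iff (by linarith), hv, hval]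
  field_simp
  linear_combination (-vbar) * hS

end MinimaxPrice

lemma antitone_underpricingRegret {μ vbar : ℝ} (hμ : 0 ≤ μ) (hvbar : 0 < vbar) :
    Antitone (underpricingRegret μ vbar) := fun a b hab => by
  unfold underpricingRegret
  gcongr

lemma monotoneOn_overpricingRegret {μ vbar : ℝ} (hμv : μ ≤ vbar) :
    MonotoneOn (overpricingRegret μ vbar) (Ico 0 vbar) := fun a ha b hb hab => by
  unfold overpricingRegret
  have : 0 < vbar - b := sub_pos.2 hb.2
  have : 0 ≤ vbar - μ := sub_nonneg.2 hμv
  have := hb.1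
  gcongr

/-- The minimax-regret posted price under the exact-mean ambiguity set is
`v₁ = v̄(μ + v̄ - √((v̄-μ)(3μ+v̄)))/(2μ)`, with optimal worst-case regret
`(μ - v̄ + √((v̄-μ)(3μ+v̄)))/2`. -/
theorem stmt19 (μ vbar : ℝ) (hμ : 0 < μ) (hμv : μ < vbar)
    (v1s val : ℝ)
    (hv1s : v1s = vbar * (μ + vbar - Real.sqrt ((vbar - μ) * (3 * μ + vbar))) / (2 * μ))
    (hval : val = (μ - vbar + Real.sqrt ((vbar - μ) * (3 * μ + vbar))) / 2) :
    worstRegret μ vbar v1s = val ∧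
    ∀ v1 ∈ Icc (0 : ℝ) vbar, val ≤ worstRegret μ vbar v1 := by
  have hvbar : 0 < vbar := hμ.trans hμv
  obtain ⟨hv1s₀, hv1s_lt⟩ := minimaxPrice_mem_Ioo hμ hμv hv1s
  have hunder := underpricingRegret_minimaxPrice hμ hμv hv1s hval
  have hover := overpricingRegret_minimaxPrice hμ hμv hv1s hval
  have lower : ∀ v1 ∈ Icc (0 : ℝ) vbar, val ≤ worstRegret μ vbar v1 := by
    intro v1 hv1
    rcases le_or_gt v1 v1s with hle | hlt
    · calc val = underpricingRegret μ vbar v1s := hunder.symm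
        _ ≤ underpricingRegret μ vbar v1 := antitone_underpricingRegret hμ.le hvbar hle
        _ ≤ worstRegret μ vbar v1 := underpricingRegret_le_worstRegret hμ.le hμv hv1
    rcases le_or_gt v1 μ with hle' | hlt'
    · calc val = overpricingRegret μ vbar v1s := hover.symm
        _ ≤ overpricingRegret μ vbar v1 := monotoneOn_overpricingRegret hμv.le
            ⟨hv1s₀.le, hv1s_lt⟩ ⟨hv1.1, by linarith⟩ hlt.le
        _ ≤ worstRegret μ vbar v1 := overpricingRegret_le_worstRegret (hv1s₀.trans hlt) hle' hμv
    · calc val = underpricingRegret μ vbar v1s := hunder.symm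
        _ ≤ underpricingRegret μ vbar 0 := antitone_underpricingRegret hμ.le hvbar hv1s₀.le
        _ = μ := by simp [underpricingRegret, hvbar.ne']
        _ ≤ worstRegret μ vbar v1 := mean_le_worstRegret hμ.le hlt' hv1.2
  refine ⟨le_antisymm ?_ (lower v1s ⟨hv1s₀.le, hv1s_lt.le⟩), lower⟩
  calc worstRegret μ vbar v1s
      ≤ max (underpricingRegret μ vbar v1s) (overpricingRegret μ vbar v1s) :=
        worstRegret_le_max hμ.le hv1s₀ hv1s_lt
    _ = val := by rw [hunder, hover, max_self]
end
end
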